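/- arXiv:2201.00545 — 7 statements merged into one kernel-verified Lean document; each statement's English description precedes it below -/
import Mathlib

section
/- For every real number b > 1/2, the value m = (1+2b²)/(b²+2b) satisfies 1 ≤ m < 2. Moreover, for every m with 1 ≤ m < 2 there exists b > 1/2 with (1+2b²)/(b²+2b) = m. -/
theorem stmt_0 :
    (∀ b : ℝ, b > 1/2 → 1 ≤ (1 + 2*b^2)/(b^2 + 2*b) ∧ (1 + 2*b^2)/(b^2 + 2*b) < 2) ∧
    (∀ m : ℝ, 1 ≤ m → m < 2 → ∃ b : ℝ, b > 1/2 ∧ (1 + 2*b^2)/(b^2 + 2*b) = m) := by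
  constructor
  · intro b hb
    have hd : (0:ℝ) < b^2 + 2*b := by nlinarith
    constructor
    · rw [le_div_iff₀ hd]; nlinarith [sq_nonneg (b - 1)]
    · rw [div_lt_iff₀ hd]; nlinarith
  · intro m h1 h2
    set s := Real.sqrt (m^2 + m - 2) with hsdef
    have hs : s^2 = m^2 + m - 2 := Real.sq_sqrt (by nlinarith)
    have hs0 : 0 ≤ s := Real.sqrt_nonneg _
    have h2m : (0:ℝ) < 2 - m := by linarith
    set b : ℝ := (m + s)/(2 - m) with hbdef
    have hsb : b * (2 - m) = m + s := by
      rw [hbdef]; field_simp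
    have hb : b > 1/2 := by rw [hbdef, gt_iff_lt, lt_div_iff₀ h2m]; nlinarith
    refine ⟨b, hb, ?_⟩
    have hd : (0:ℝ) < b^2 + 2*b := by nlinarith
    have key2 : ((2 - m)*b^2 - 2*m*b + 1)*(2 - m) = 0 := by
      linear_combination (b*(2 - m) + (m + s))*hsb - 2*m*hsb + hs
    have key : (2 - m)*b^2 - 2*m*b + 1 = 0 := by
      rcases mul_eq_zero.mp key2 with h | h
      · exact h
      · exact absurd h (ne_of_gt h2m)
    rw [div_eq_iff (ne_of_gt hd)]
    linear_combination key
end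

section
/- In any right triangle with legs a, b and hypotenuse c, the ratio m = (m_a + m_b)/(a + b + c) of the sum of the two medians to the legs over the perimeter satisfies √((5/2)(3 − 2√2)) ≤ m < 3/4. -/
lemma aux_le_of_sq (x y : ℝ) (hx : 0 ≤ x) (hy : 0 ≤ y) (h : x^2 ≤ y^2) : x ≤ y := by
  nlinarith [sq_nonneg (x - y), sq_nonneg (x + y)]

lemma aux_lt_of_sq (x y : ℝ) (hx : 0 ≤ x) (hy : 0 ≤ y) (h : x^2 < y^2) : x < y := by
  nlinarith [sq_nonneg (x - y), sq_nonneg (x + y)]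

set_option maxHeartbeats 1000000 in
theorem stmt_4 (a b : ℝ) (ha : 0 < a) (hb : 0 < b) :
    Real.sqrt ((5/2) * (3 - 2 * Real.sqrt 2)) ≤
      ((1/2) * Real.sqrt (4*b^2 + a^2) + (1/2) * Real.sqrt (4*a^2 + b^2)) /
        (a + b + Real.sqrt (a^2 + b^2)) ∧
    ((1/2) * Real.sqrt (4*b^2 + a^2) + (1/2) * Real.sqrt (4*a^2 + b^2)) /
        (a + b + Real.sqrt (a^2 + b^2)) < 3/4 := by
  set c := Real.sqrt (a^2 + b^2) with hc
  set u := Real.sqrt (4*b^2 + a^2) with hu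
  set v := Real.sqrt (4*a^2 + b^2) with hv
  set w := Real.sqrt 2 with hw
  have hc2 : c^2 = a^2 + b^2 := Real.sq_sqrt (by positivity)
  have hu2 : u^2 = 4*b^2 + a^2 := Real.sq_sqrt (by positivity)
  have hv2 : v^2 = 4*a^2 + b^2 := Real.sq_sqrt (by positivity)
  have hw2 : w^2 = 2 := Real.sq_sqrt (by norm_num)
  have hc0 : 0 ≤ c := Real.sqrt_nonneg _
  have hu0 : 0 ≤ u := Real.sqrt_nonneg _
  have hv0 : 0 ≤ v := Real.sqrt_nonneg _
  have hw0 : 0 ≤ w := Real.sqrt_nonneg _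
  have hw32 : w ≤ 3/2 := by nlinarith
  have hw41 : w ≤ 41/25 := by nlinarith
  have hw1 : 1 ≤ w := by nlinarith
  have hD : 0 < a + b + c := by linarith
  constructor
  · rw [le_div_iff₀ hD]
    have h32 : (0:ℝ) ≤ 3 - 2*w := by linarith
    have hL2 : (Real.sqrt ((5/2) * (3 - 2*w)))^2 = (5/2) * (3 - 2*w) :=
      Real.sq_sqrt (by nlinarith)
    have hL0 : 0 ≤ Real.sqrt ((5/2) * (3 - 2*w)) := Real.sqrt_nonneg _
    set L := Real.sqrt ((5/2) * (3 - 2*w)) with hL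
    -- step A : 5*u*v ≥ 8*(a²+b²) + 9ab
    have hA : 8*(a^2+b^2) + 9*(a*b) ≤ 5*(u*v) := by
      apply aux_le_of_sq _ _ (by positivity) (by positivity)
      have huv : (5*(u*v))^2 = 25 * ((4*b^2+a^2) * (4*a^2+b^2)) := by
        rw [mul_pow, mul_pow, hu2, hv2]; ring
      rw [huv]; nlinarith [sq_nonneg ((a-b)^2)]
    -- step B : 2*(a+b)*c ≤ (3w/2)(a²+b²) + w*ab
    have hB : 2*(a+b)*c ≤ (3*w/2)*(a^2+b^2) + w*(a*b) := by
      apply aux_le_of_sq _ _ (by positivity) (by positivity)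
      have h1 : (2*(a+b)*c)^2 = 4*(a+b)^2*(a^2+b^2) := by
        rw [mul_pow, hc2]; ring
      have h2 : ((3*w/2)*(a^2+b^2) + w*(a*b))^2
          = (9/2)*(a^2+b^2)^2 + 6*(a^2+b^2)*(a*b) + 2*(a*b)^2 := by
        linear_combination (((3/2)*(a^2+b^2) + a*b)^2) * hw2
      rw [h1, h2]; nlinarith [sq_nonneg ((a-b)^2)]
    have hB2 : (5/2)*(3-2*w)*(2*(a+b)*c)
        ≤ (5/2)*((9*w/2 - 6)*(a^2+b^2) + (3*w-4)*(a*b)) := by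
      calc (5/2)*(3-2*w)*(2*(a+b)*c)
          ≤ (5/2)*(3-2*w)*((3*w/2)*(a^2+b^2) + w*(a*b)) := by
            apply mul_le_mul_of_nonneg_left hB (by linarith)
        _ = (5/2)*((9*w/2 - 6)*(a^2+b^2) + (3*w-4)*(a*b)) := by
            linear_combination (-(15/2)*(a^2+b^2) - 5*(a*b)) * hw2
    -- squared main inequality
    have hmain : (L * (a+b+c))^2 ≤ ((1/2)*u + (1/2)*v)^2 := by
      have hexp : (L * (a+b+c))^2
          = (5/2)*(3-2*w)*(2*(a^2+b^2) + 2*(a*b)) + (5/2)*(3-2*w)*(2*(a+b)*c) := by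
        rw [mul_pow, hL2]; linear_combination ((5/2)*(3-2*w)) * hc2
      have hexp2 : ((1/2)*u + (1/2)*v)^2 = (5/4)*(a^2+b^2) + (1/2)*(u*v) := by
        linear_combination (1/4)*hu2 + (1/4)*hv2
      rw [hexp, hexp2]
      nlinarith [hA, hB2, mul_nonneg (by linarith : (0:ℝ) ≤ 41 - 25*w) (sq_nonneg (a-b))]
    exact aux_le_of_sq _ _ (by positivity) (by positivity) hmain
  · rw [div_lt_iff₀ hD]
    have hbc : b < c := aux_lt_of_sq _ _ hb.le hc0 (by rw [hc2]; nlinarith)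
    have hac : a < c := aux_lt_of_sq _ _ ha.le hc0 (by rw [hc2]; nlinarith)
    have hcab : c < a + b := aux_lt_of_sq _ _ hc0 (by linarith) (by rw [hc2]; nlinarith [mul_pos ha hb])
    have hub : u < b + c := aux_lt_of_sq _ _ hu0 (by linarith) (by rw [hu2]; nlinarith)
    have hvb : v < a + c := aux_lt_of_sq _ _ hv0 (by linarith) (by rw [hv2]; nlinarith)
    linarith
end

section
/- In a right triangle with legs a, b and hypotenuse c, the ratio (m_a + m_b)/(a + b + c) equals √((5/2)(3 − 2√2)) if and only if a = b (the isosceles right triangle). -/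
set_option maxHeartbeats 2000000 in
theorem stmt_5 (a b : ℝ) (ha : 0 < a) (hb : 0 < b) :
    ((1/2) * Real.sqrt (4*b^2 + a^2) + (1/2) * Real.sqrt (4*a^2 + b^2)) /
        (a + b + Real.sqrt (a^2 + b^2)) = Real.sqrt ((5/2) * (3 - 2 * Real.sqrt 2)) ↔
      a = b := by
  set u := Real.sqrt 2 with hud
  have hu0 : 0 < u := Real.sqrt_pos.mpr (by norm_num)
  have hu2 : u^2 = 2 := Real.sq_sqrt (by norm_num)
  have huu : u ≤ 14143/10000 := by nlinarith [sq_nonneg (u - 14143/10000)]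
  have hul : 707/500 ≤ u := by nlinarith [hu0]
  set v := Real.sqrt 5 with hvd
  have hv0 : 0 < v := Real.sqrt_pos.mpr (by norm_num)
  have hv2 : v^2 = 5 := Real.sq_sqrt (by norm_num)
  set c := Real.sqrt (a^2+b^2) with hcd
  have hc0 : 0 < c := Real.sqrt_pos.mpr (by positivity)
  have hc2 : c^2 = a^2+b^2 := Real.sq_sqrt (by positivity)
  set S := Real.sqrt (4*b^2+a^2) with hSd
  set T := Real.sqrt (4*a^2+b^2) with hTd
  have hS0 : 0 ≤ S := Real.sqrt_nonneg _
  have hT0 : 0 ≤ T := Real.sqrt_nonneg _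
  have hS2 : S^2 = 4*b^2+a^2 := Real.sq_sqrt (by positivity)
  have hT2 : T^2 = 4*a^2+b^2 := Real.sq_sqrt (by positivity)
  have hRHS : Real.sqrt ((5/2) * (3 - 2*u)) = v / (2+u) := by
    rw [show (5/2) * (3 - 2*u) = (v/(2+u))^2 by
      rw [div_pow, eq_div_iff (by positivity)]
      linear_combination (-25/2 - 5*u)*hu2 - hv2]
    exact Real.sqrt_sq (by positivity)
  rw [hRHS]
  have hden : 0 < a + b + c := by linarith
  rw [div_eq_div_iff hden.ne' (by positivity : (2+u:ℝ) ≠ 0)]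
  constructor
  · intro h
    have h1 : (2+u)^2*(S+T)^2 = 20*(a+b+c)^2 := by
      linear_combination (4*((1/2*S+1/2*T)*(2+u)) + 4*v*(a+b+c)) * h + 4*(a+b+c)^2*hv2
    have h2 : (12+8*u)*(S*T) = (10-20*u)*(a^2+b^2) + 40*(a*b) + 40*((a+b)*c) := by
      linear_combination h1 + ((-4) + (-4)*u + (-1)*u^2)*hS2 + ((-4) + (-4)*u + (-1)*u^2)*hT2
        + 20*hc2 + ((-2)*S*T + (-5)*b^2 + (-5)*a^2)*hu2
    have hsqr : ((12+8*u)*(S*T))^2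
        = ((10-20*u)*(a^2+b^2) + 40*(a*b) + 40*((a+b)*c))^2 := by rw [h2]
    have hE : ((-1412+1168*u)*(a^2+b^2)^2 + (848+1728*u)*(a*b)^2 + (-4000+1600*u)*(a*b)*(a^2+b^2)) = ((a+b)*c) * ((800-1600*u)*(a^2+b^2) + 3200*(a*b)) := by
      linear_combination hsqr + ((-144)*T^2 + (-192)*u*T^2 + (-64)*u^2*T^2)*hS2
        + ((-576)*b^2 + (-768)*b^2*u + (-256)*b^2*u^2 + (-144)*a^2 + (-192)*a^2*u + (-64)*a^2*u^2)*hT2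
        + ((1600)*b^2 + (3200)*a*b + (1600)*a^2)*hc2
        + ((144)*b^4 + (-288)*a^2*b^2 + (144)*a^4)*hu2
    have hL4 : 0 < ((-1412+1168*u)*(a^2+b^2)^2 + (848+1728*u)*(a*b)^2 + (-4000+1600*u)*(a*b)*(a^2+b^2)) := by
      clear hsqr h2 h1 h hE
      have hd : (0:ℝ) ≤ u - 707/500 := by linarith
      have hq : (0:ℝ) ≤ (u-707/500)*(1168*(a^2+b^2)^2 + 1728*(a*b)^2 + 1600*(a*b)*(a^2+b^2)) :=
        mul_nonneg hd (by positivity)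
      have hp4 : 0 < (a*b)^2 := by positivity
      have hs1 : (0:ℝ) ≤ (3743*(a^2+b^2) - 13575*(a*b))^2 := sq_nonneg _
      linarith [hq, hp4, hs1]
    have hWpos : 0 < (a+b)*c := by positivity
    have hM4 : 0 < ((800-1600*u)*(a^2+b^2) + 3200*(a*b)) := by
      by_contra hcon
      push_neg at hcon
      have h8 : ((a+b)*c) * ((800-1600*u)*(a^2+b^2) + 3200*(a*b)) ≤ 0 :=
        mul_nonpos_of_nonneg_of_nonpos hWpos.le hcon
      clear hsqr h2 h1 h
      linarith [hE, hL4, h8]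
    have hf : 0 ≤ (a^2+b^2) - 2*(a*b) := by
      clear hsqr h2 h1 h hE
      linarith [sq_nonneg (a-b)]
    have key2 : 4*(1200-800*u)^3 * (16*((-64863-46152*u)*(a^2+b^2)^3 + (3474+1296*u)*(a^2+b^2)^2*(a*b) + (401852+301408*u)*(a^2+b^2)*(a*b)^2 + (-209096-91584*u)*(a*b)^3))
        = (89600+147200*u)*((800-1600*u)*(a^2+b^2) + 3200*(a*b))^3 + 4*(259961600+12608000*u)*((800-1600*u)*(a^2+b^2) + 3200*(a*b))^2*((a^2+b^2)-2*(a*b))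
          + 16*(-30017280000+77834240000*u)*((800-1600*u)*(a^2+b^2) + 3200*(a*b))*((a^2+b^2)-2*(a*b))^2
          + 64*(15163584000000-6022016000000*u)*((a^2+b^2)-2*(a*b))^3 := by
      linear_combination ((4235476992000000)*b^6 + (-5346459648000000)*b^6*u + (2115239936000000)*b^6*u^2 + (-831750144000000)*a*b^5 + (-3282108416000000)*a*b^5*u + (-42467328000000)*a*b^5*u^2 + (-285229056000000)*a^2*b^4 + (15237152768000000)*a^2*b^4*u + (-3530817536000000)*a^2*b^4*u^2 + (-6236995584000000)*a^3*b^3 + (-13217169408000000)*a^3*b^3*u + (2916089856000000)*a^3*b^3*u^2 + (-285229056000000)*a^4*b^2 + (15237152768000000)*a^4*b^2*u + (-3530817536000000)*a^4*b^2*u^2 + (-831750144000000)*a^5*b + (-3282108416000000)*a^5*b*u + (-42467328000000)*a^5*b*u^2 + (4235476992000000)*a^6 + (-5346459648000000)*a^6*u + (2115239936000000)*a^6*u^2)*hu2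
    have hG4 : 0 < (16*((-64863-46152*u)*(a^2+b^2)^3 + (3474+1296*u)*(a^2+b^2)^2*(a*b) + (401852+301408*u)*(a^2+b^2)*(a*b)^2 + (-209096-91584*u)*(a*b)^3)) := by
      have hden2 : 0 < 1200 - 800*u := by linarith
      have hterm1 : 0 < (89600+147200*u)*((800-1600*u)*(a^2+b^2) + 3200*(a*b))^3 := by positivity
      have hterm2 : 0 ≤ 4*(259961600+12608000*u)*((800-1600*u)*(a^2+b^2) + 3200*(a*b))^2*((a^2+b^2)-2*(a*b)) := by positivity
      have hterm3 : 0 ≤ 16*(-30017280000+77834240000*u)*((800-1600*u)*(a^2+b^2) + 3200*(a*b))*((a^2+b^2)-2*(a*b))^2 := by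
        have h31 : (0:ℝ) ≤ 16*(-30017280000+77834240000*u) := by linarith
        exact mul_nonneg (mul_nonneg h31 hM4.le) (sq_nonneg _)
      have hterm4 : 0 ≤ 64*(15163584000000-6022016000000*u)*((a^2+b^2)-2*(a*b))^3 := by
        have h41 : (0:ℝ) ≤ 64*(15163584000000-6022016000000*u) := by linarith
        exact mul_nonneg h41 (pow_nonneg hf 3)
      clear hsqr h2 h1 h hE
      by_contra hng
      push_neg at hng
      have h9 : 4*(1200-800*u)^3 * (16*((-64863-46152*u)*(a^2+b^2)^3 + (3474+1296*u)*(a^2+b^2)^2*(a*b) + (401852+301408*u)*(a^2+b^2)*(a*b)^2 + (-209096-91584*u)*(a*b)^3)) ≤ 0 :=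
        mul_nonpos_of_nonneg_of_nonpos (by positivity) hng
      linarith [key2, hterm1, hterm2, hterm3, hterm4, h9]
    have hQ : (a-b)^2 * (16*((-64863-46152*u)*(a^2+b^2)^3 + (3474+1296*u)*(a^2+b^2)^2*(a*b) + (401852+301408*u)*(a^2+b^2)*(a*b)^2 + (-209096-91584*u)*(a*b)^3)) = 0 := by
      linear_combination (((-1412+1168*u)*(a^2+b^2)^2 + (848+1728*u)*(a*b)^2 + (-4000+1600*u)*(a*b)*(a^2+b^2)) + ((a+b)*c)*((800-1600*u)*(a^2+b^2) + 3200*(a*b)))*hE + ((640000)*b^6 + (-2560000)*b^6*u + (2560000)*b^6*u^2 + (6400000)*a*b^5 + (-15360000)*a*b^5*u + (5120000)*a*b^5*u^2 + (22400000)*a^2*b^4 + (-28160000)*a^2*b^4*u + (7680000)*a^2*b^4*u^2 + (33280000)*a^3*b^3 + (-30720000)*a^3*b^3*u + (10240000)*a^3*b^3*u^2 + (22400000)*a^4*b^2 + (-28160000)*a^4*b^2*u + (7680000)*a^4*b^2*u^2 + (6400000)*a^5*b + (-15360000)*a^5*b*u + (5120000)*a^5*b*u^2 + (640000)*a^6 +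 (-2560000)*a^6*u + (2560000)*a^6*u^2)*hc2 + ((1195776)*b^8 + (1382400)*a*b^7 + (-1813504)*a^2*b^6 + (-1382400)*a^3*b^5 + (-9004544)*a^4*b^4 + (-1382400)*a^5*b^3 + (-1813504)*a^6*b^2 + (1382400)*a^7*b + (1195776)*a^8)*hu2
    have h6 : (a-b)^2 = 0 := (mul_eq_zero.mp hQ).resolve_right hG4.ne'
    have h7 : a - b = 0 := by
      exact pow_eq_zero_iff (two_ne_zero) |>.mp h6
    linarith
  · intro hab
    subst hab
    have hSa : S = v*a := by
      rw [hSd, show (4*a^2+a^2 : ℝ) = (v*a)^2 by nlinarith [hv2], Real.sqrt_sq (by positivity)]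
    have hTa : T = v*a := by
      rw [hTd, show (4*a^2+a^2 : ℝ) = (v*a)^2 by nlinarith [hv2], Real.sqrt_sq (by positivity)]
    have hca : c = u*a := by
      rw [hcd, show (a^2+a^2 : ℝ) = (u*a)^2 by nlinarith [hu2], Real.sqrt_sq (by positivity)]
    rw [hSa, hTa, hca]
    ring
end

section
/- For every m with √((5/2)(3 − 2√2)) ≤ m < 3/4, there exists a right triangle with legs a, b > 0 such that (m_a + m_b)/(a + b + c) = m, where c = √(a²+b²). -/
/-! The ratio is homogeneous of degree 0, so fix `a = 1` and let `b` run over `[0, 1]`. It is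
continuous in `b`, equals `3/4` in the degenerate case `b = 0` and the lower bound in the isosceles
case `b = 1`, so the intermediate value theorem gives every value in between, at some `b ≠ 0`
when `m < 3/4`. -/

open Real

noncomputable def medianPerimeterRatio (a b : ℝ) : ℝ :=
  ((1/2) * √(4*b^2 + a^2) + (1/2) * √(4*a^2 + b^2)) / (a + b + √(a^2 + b^2))

lemma add_add_sqrt_sq_add_sq_pos {a : ℝ} (ha : 0 < a) (b : ℝ) : 0 < a + b + √(a^2 + b^2) := by
  have : |b| < √(a^2 + b^2) := by
    rw [← sqrt_sq_eq_abs]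
    exact sqrt_lt_sqrt (sq_nonneg b) (by nlinarith)
  linarith [neg_abs_le b]

lemma continuous_medianPerimeterRatio_one : Continuous (medianPerimeterRatio 1) := by
  unfold medianPerimeterRatio
  exact Continuous.div (by fun_prop) (by fun_prop)
    fun b => (add_add_sqrt_sq_add_sq_pos one_pos b).ne'

lemma medianPerimeterRatio_one_zero : medianPerimeterRatio 1 0 = 3/4 := by
  norm_num [medianPerimeterRatio]

lemma medianPerimeterRatio_one_one :
    medianPerimeterRatio 1 1 = √((5/2) * (3 - 2 * √2)) := by
  have h2 : √2 ^ 2 = 2 := sq_sqrt zero_le_two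
  have hlt : √2 < 2 := by nlinarith [sqrt_nonneg 2]
  have hsq : (5/2) * (3 - 2 * √2) = 5 * ((2 - √2) / 2) ^ 2 := by linear_combination (-5/4) * h2
  rw [hsq, sqrt_mul (by norm_num), sqrt_sq (by linarith)]
  norm_num [medianPerimeterRatio]
  field_simp
  linear_combination h2

theorem stmt_6 (m : ℝ) (h₁ : Real.sqrt ((5/2) * (3 - 2 * Real.sqrt 2)) ≤ m) (h₂ : m < 3/4) :
    ∃ a b : ℝ, 0 < a ∧ 0 < b ∧
      ((1/2) * Real.sqrt (4*b^2 + a^2) + (1/2) * Real.sqrt (4*a^2 + b^2)) /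
        (a + b + Real.sqrt (a^2 + b^2)) = m := by
  have hm : m ∈ Set.Icc (medianPerimeterRatio 1 1) (medianPerimeterRatio 1 0) := by
    rw [medianPerimeterRatio_one_zero, medianPerimeterRatio_one_one]
    exact ⟨h₁, h₂.le⟩
  obtain ⟨b, hb, hbm⟩ := intermediate_value_Icc' zero_le_one
    continuous_medianPerimeterRatio_one.continuousOn hm
  have hb0 : b ≠ 0 := by
    rintro rfl
    rw [medianPerimeterRatio_one_zero] at hbm
    linarith
  exact ⟨1, b, one_pos, lt_of_le_of_ne hb.1 (Ne.symm hb0), hbm⟩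
end

section
/- For every real number m ≥ √2 + 1 there exists a right triangle whose ratio of circumradius to inradius equals m. -/
/-!
Both radii scale linearly, so we may take the hypotenuse to be `1`; then `R / r = 1 / (a + b - 1)`.
As the legs vary, `a + b` sweeps out `(1, √2]`, so `R / r` sweeps out `[√2 + 1, ∞)`:
given `m`, choose legs with `a + b = 1 + 1 / m`.
-/

/-- The legs are the roots `(s ± √(2c² - s²)) / 2` of `x² - s x + (s² - c²) / 2`. -/
theorem exists_pos_add_eq_and_sq_add_sq_eq {c s : ℝ} (hcs : c < s) (hs : s ≤ Real.sqrt 2 * c) :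
    ∃ a b : ℝ, 0 < a ∧ 0 < b ∧ a + b = s ∧ a ^ 2 + b ^ 2 = c ^ 2 := by
  have hsqrt : 1 < Real.sqrt 2 := by
    rw [Real.lt_sqrt zero_le_one]; norm_num
  have hc : 0 < c := by nlinarith
  have hs0 : 0 ≤ s := by linarith
  have hdisc : 0 ≤ 2 * c ^ 2 - s ^ 2 := by
    nlinarith [Real.sq_sqrt (show (0 : ℝ) ≤ 2 by norm_num), mul_self_le_mul_self hs0 hs]
  set d := Real.sqrt (2 * c ^ 2 - s ^ 2)
  have hd0 : 0 ≤ d := Real.sqrt_nonneg _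
  have hd_sq : d ^ 2 = 2 * c ^ 2 - s ^ 2 := Real.sq_sqrt hdisc
  have hds : d < s := by
    rw [← abs_of_nonneg hd0, ← abs_of_nonneg hs0]
    exact sq_lt_sq.mp (by nlinarith)
  refine ⟨(s + d) / 2, (s - d) / 2, by linarith, by linarith, by ring, ?_⟩
  linear_combination hd_sq / 2

theorem one_add_inv_le_sqrt_two {m : ℝ} (hm : Real.sqrt 2 + 1 ≤ m) : 1 + m⁻¹ ≤ Real.sqrt 2 := by
  have hsqrt : Real.sqrt 2 ^ 2 = 2 := Real.sq_sqrt (by norm_num)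
  have hm0 : 0 < Real.sqrt 2 + 1 := by positivity
  have hinv : (Real.sqrt 2 + 1)⁻¹ = Real.sqrt 2 - 1 :=
    inv_eq_of_mul_eq_one_right (by linear_combination hsqrt)
  linarith [inv_anti₀ hm0 hm]

theorem stmt_8 (m : ℝ) (hm : m ≥ Real.sqrt 2 + 1) :
    ∃ a b : ℝ, 0 < a ∧ 0 < b ∧
      (Real.sqrt (a^2 + b^2) / 2) / ((a + b - Real.sqrt (a^2 + b^2)) / 2) = m := by
  have hm0 : 0 < m := lt_of_lt_of_le (by positivity) hm
  obtain ⟨a, b, ha, hb, hsum, hhyp⟩ := exists_pos_add_eq_and_sq_add_sq_eq (c := 1)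
    (s := 1 + m⁻¹) (by simpa using hm0) (by simpa using one_add_inv_le_sqrt_two hm)
  refine ⟨a, b, ha, hb, ?_⟩
  rw [hhyp, one_pow, Real.sqrt_one, hsum]
  field_simp
  ring
end

section
/- There exist positive reals v13, v15, v16, v17 satisfying v13 + v16 = m(1 + v15 + v17), 15 + 4v13² = 16v16², 3 + v17² = 4v16², and 4 + v15² = 4v16², if and only if √((5/2)(3 − 2√2)) ≤ m < 3/4. -/
set_option maxHeartbeats 1000000

private theorem upperLem (b p q r : ℝ) (hb : 0 < b) (hp : 0 < p) (hq : 0 < q) (hr : 0 < r)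
    (h1 : p^2 = 4*b^2+1) (h2 : q^2 = b^2+4) (h3 : r^2 = b^2+1) :
    2*p + 2*q < 3 + 3*b + 3*r := by
  have hr1 : 1 ≤ r := by nlinarith
  have hrb : r ≤ b + 1 := by nlinarith
  have hp1 : 2*b ≤ p := by nlinarith
  have hq1 : b ≤ q := by nlinarith
  have h4 : (r-1)*(b+2) ≥ b^2 := by nlinarith
  have h5 : (p-1)*(2*b+1) ≤ 4*b^2 := by nlinarith
  have h6 : (q-2)*(b+2) ≤ b^2 := by nlinarith
  have hA : (0:ℝ) < b + 2 := by linarith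
  have hB : (0:ℝ) < 2*b + 1 := by linarith
  nlinarith [mul_pos hA hB, mul_le_mul_of_nonneg_left h5 hA.le,
    mul_le_mul_of_nonneg_left h6 hB.le, mul_le_mul_of_nonneg_left (le_of_lt hB) hA.le,
    mul_le_mul_of_nonneg_left h4.le hB.le]

private theorem minLem (b p q r s : ℝ) (hb : 0 < b) (hp : 0 < p) (hq : 0 < q) (hr : 0 < r)
    (hs0 : 0 < s) (hs : s^2 = 2)
    (h1 : p^2 = 4*b^2+1) (h2 : q^2 = b^2+4) (h3 : r^2 = b^2+1) :
    (30-20*s)*(1+b+r)^2 ≤ (p+q)^2 := by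
  have hs14 : 141/100 < s := by nlinarith
  have hs15 : s < 3/2 := by nlinarith
  have hpq2 : (p*q)^2 = (4*b^2+1)*(b^2+4) := by rw [mul_pow, h1, h2]
  have hpqpos : 0 < p*q := mul_pos hp hq
  have hpq : 8*b^2+9*b+8 ≤ 5*(p*q) := by
    nlinarith [hpq2, hpqpos, sq_nonneg ((b-1)^2), sq_nonneg b]
  have hA : 0 ≤ 656*s - 22919/25 := by linarith
  have hAB : 0 ≤ 2*(656*s-22919/25)+(2256*s-79762/25) := by linarith
  have hident : ((41*b^2+18*b+41)/5 - 2*(30-20*s)*(1+b+b^2))^2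
      - 4*(30-20*s)^2*((1+b)^2*(b^2+1))
      = (656*s-22919/25)*((b-1)^2)^2
        + (2*(656*s-22919/25)+(2256*s-79762/25))*(b*(b-1)^2) := by
    linear_combination (1600*b^2) * hs
  have hD : 4*(30-20*s)^2*((1+b)^2*(b^2+1))
      ≤ ((41*b^2+18*b+41)/5 - 2*(30-20*s)*(1+b+b^2))^2 := by
    linarith [hident, mul_nonneg hA (sq_nonneg ((b-1)^2)),
      mul_nonneg hAB (mul_nonneg hb.le (sq_nonneg (b-1)))]
  have hL : 0 ≤ (41*b^2+18*b+41)/5 - 2*(30-20*s)*(1+b+b^2) := by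
    have c1 : 0 ≤ (s-141/100)*b^2 := mul_nonneg (by linarith) (sq_nonneg b)
    have c2 : 0 ≤ (s-141/100)*b := mul_nonneg (by linarith) hb.le
    linarith [c1, c2, sq_nonneg b]
  have hsq : (2*(30-20*s)*((1+b)*r))^2 = 4*(30-20*s)^2*((1+b)^2*(b^2+1)) := by
    linear_combination (4*(30-20*s)^2*(1+b)^2)*h3
  have hpos : 0 ≤ 2*(30-20*s)*((1+b)*r) := by
    have : 0 < 30-20*s := by linarith
    positivity
  have hrK : 2*(30-20*s)*((1+b)*r) ≤ (41*b^2+18*b+41)/5 - 2*(30-20*s)*(1+b+b^2) := by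
    rw [← Real.sqrt_sq hpos, ← Real.sqrt_sq hL]
    exact Real.sqrt_le_sqrt (le_trans (le_of_eq hsq) hD)
  have hexp : (30-20*s)*(1+b+r)^2 = (30-20*s)*(2+2*b+2*b^2) + 2*(30-20*s)*((1+b)*r) := by
    linear_combination (30-20*s)*h3
  have hexp2 : (p+q)^2 = 5*b^2+5+2*(p*q) := by linear_combination h1+h2
  linarith [hexp, hexp2, hrK, hpq]

theorem stmt_16 (m : ℝ) :
    (∃ v13 v15 v16 v17 : ℝ, 0 < v13 ∧ 0 < v15 ∧ 0 < v16 ∧ 0 < v17 ∧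
      v13 + v16 = m * (1 + v15 + v17) ∧
      15 + 4*v13^2 = 16*v16^2 ∧
      3 + v17^2 = 4*v16^2 ∧
      4 + v15^2 = 4*v16^2) ↔
    (Real.sqrt ((5/2) * (3 - 2 * Real.sqrt 2)) ≤ m ∧ m < 3/4) := by
  have hs : Real.sqrt 2 ^ 2 = 2 := Real.sq_sqrt (by norm_num)
  have hs0 : 0 < Real.sqrt 2 := Real.sqrt_pos.mpr (by norm_num)
  have h5s : Real.sqrt 5 ^ 2 = 5 := Real.sq_sqrt (by norm_num)
  have h5s0 : 0 ≤ Real.sqrt 5 := Real.sqrt_nonneg 5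
  have hxx : Real.sqrt ((5/2) * (3 - 2 * Real.sqrt 2)) * (2 + Real.sqrt 2) = Real.sqrt 5 := by
    have hv : ((5:ℝ)/2) * (3 - 2 * Real.sqrt 2) = (Real.sqrt 5 / (2 + Real.sqrt 2))^2 := by
      rw [div_pow, h5s, eq_div_iff (by positivity)]
      linear_combination (-5*Real.sqrt 2 - 25/2) * hs
    rw [hv, Real.sqrt_sq (by positivity), div_mul_cancel₀]
    positivity
  constructor
  · rintro ⟨a, b, c, d, ha, hb, hc, hd, hm, e1, e2, e3⟩
    have h1 : (2*a)^2 = 4*b^2+1 := by linear_combination e1 - 4*e3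
    have h2 : (2*c)^2 = b^2+4 := by linear_combination -e3
    have h3 : d^2 = b^2+1 := by linear_combination e2 - e3
    have hbd : (0:ℝ) < 1 + b + d := by linarith
    have hm0 : 0 < m := by
      by_contra hcon
      push_neg at hcon
      nlinarith [hm]
    constructor
    · have key := minLem b (2*a) (2*c) d (Real.sqrt 2) hb (by linarith) (by linarith) hd hs0 hs h1 h2 h3
      have h4 : (2*a+2*c)^2 = 4*m^2*(1+b+d)^2 := by
        have h5 : 2*a+2*c = 2*(m*(1+b+d)) := by linarith
        rw [h5]; ring
      have hmsq : (5/2) * (3 - 2 * Real.sqrt 2) ≤ m^2 := by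
        rw [h4] at key
        have hbd2 : 0 < (1+b+d)^2 := by positivity
        nlinarith [key, hbd2]
      calc Real.sqrt ((5/2) * (3 - 2 * Real.sqrt 2)) ≤ Real.sqrt (m^2) := Real.sqrt_le_sqrt hmsq
        _ = m := Real.sqrt_sq hm0.le
    · have key := upperLem b (2*a) (2*c) d hb (by linarith) (by linarith) hd h1 h2 h3
      nlinarith [key, hm, hbd]
  · rintro ⟨hm1, hm2⟩
    have hm0 : 0 ≤ m := le_trans (Real.sqrt_nonneg _) hm1
    have hm34 : 0 < 3 - 4*m := by linarith
    set g : ℝ → ℝ := fun t => Real.sqrt (16*t^2-15)/2 + t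
      - m*(1 + Real.sqrt (4*t^2-4) + Real.sqrt (4*t^2-3)) with hg
    have hcont : Continuous g := by
      apply Continuous.sub
      · exact ((Real.continuous_sqrt.comp (by continuity)).div_const 2).add continuous_id
      · exact continuous_const.mul (by continuity)
    set a0 : ℝ := Real.sqrt 5 / 2 with ha0
    have h25 : (2:ℝ) ≤ Real.sqrt 5 := by nlinarith
    have h35 : Real.sqrt 5 ≤ 3 := by nlinarith
    set C : ℝ := max 2 ((2+m)/(3-4*m)) with hC
    have hC2 : (2:ℝ) ≤ C := le_max_left _ _
    have hCm : (2+m)/(3-4*m) ≤ C := le_max_right _ _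
    have hCm' : 2 + m ≤ (3-4*m)*C := by
      rw [div_le_iff₀ hm34] at hCm; linarith [hCm]
    have ha0C : a0 ≤ C := by
      rw [ha0]; nlinarith
    have hga : g a0 ≤ 0 := by
      have ea : a0^2 = 5/4 := by rw [ha0, div_pow, h5s]; norm_num
      have e1 : (16*a0^2-15 : ℝ) = 5 := by rw [ea]; norm_num
      have e2 : (4*a0^2-4 : ℝ) = 1 := by rw [ea]; norm_num
      have e3 : (4*a0^2-3 : ℝ) = 2 := by rw [ea]; norm_num
      have hmm : Real.sqrt 5 ≤ m * (2 + Real.sqrt 2) := by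
        rw [← hxx]
        exact mul_le_mul_of_nonneg_right hm1 (by positivity)
      simp only [hg, e1, e2, e3, Real.sqrt_one]
      rw [ha0]
      linarith [hmm]
    have hgC : 0 < g C := by
      have hC0 : (0:ℝ) < C := by linarith
      have u1 : 4*C - 2 ≤ Real.sqrt (16*C^2-15) := by
        have hnn : (0:ℝ) ≤ 16*C^2-15 := by nlinarith
        have := Real.sq_sqrt hnn
        have h0 := Real.sqrt_nonneg (16*C^2-15)
        nlinarith [this, h0]
      have u2 : Real.sqrt (4*C^2-4) ≤ 2*C := by
        rw [show (2*C) = Real.sqrt ((2*C)^2) from (Real.sqrt_sq (by linarith)).symm]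
        apply Real.sqrt_le_sqrt; nlinarith
      have u3 : Real.sqrt (4*C^2-3) ≤ 2*C := by
        rw [show (2*C) = Real.sqrt ((2*C)^2) from (Real.sqrt_sq (by linarith)).symm]
        apply Real.sqrt_le_sqrt; nlinarith
      have hmul : m*(1 + Real.sqrt (4*C^2-4) + Real.sqrt (4*C^2-3)) ≤ m*(1+4*C) := by
        apply mul_le_mul_of_nonneg_left _ hm0
        linarith
      simp only [hg]
      nlinarith [u1, hmul, hCm']
    obtain ⟨t, htI, hgt⟩ := intermediate_value_Icc ha0C hcont.continuousOn ⟨hga, hgC.le⟩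
    have hta : a0 ≤ t := htI.1
    have ht2 : 5/4 ≤ t^2 := by
      have ha0nn : 0 ≤ a0 := by rw [ha0]; positivity
      have : a0^2 ≤ t^2 := by nlinarith
      have ea : a0^2 = 5/4 := by rw [ha0, div_pow, h5s]; norm_num
      linarith [this, ea.symm.le, ea.le]
    have ht0 : 0 < t := by nlinarith
    have hn1 : (0:ℝ) < 16*t^2-15 := by linarith
    have hn2 : (0:ℝ) < 4*t^2-4 := by linarith
    have hn3 : (0:ℝ) < 4*t^2-3 := by linarith
    refine ⟨Real.sqrt (16*t^2-15)/2, Real.sqrt (4*t^2-4), t, Real.sqrt (4*t^2-3),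
      by positivity, Real.sqrt_pos.mpr hn2, ht0, Real.sqrt_pos.mpr hn3, ?_, ?_, ?_, ?_⟩
    · have := hgt
      simp only [hg] at this
      linarith [this]
    · rw [div_pow, Real.sq_sqrt hn1.le]; ring
    · rw [Real.sq_sqrt hn3.le]; ring
    · rw [Real.sq_sqrt hn2.le]; ring
end

section
/- The limit of (m_a + m_b)/(a + b + c) as the right triangle degenerates (a → 0 with b = 1, c = √(1+a²)) is 3/4, and this value is not attained by any non-degenerate right triangle. -/
theorem stmt_17 :
    Filter.Tendsto (fun a : ℝ =>
        ((1/2) * Real.sqrt (4*1^2 + a^2) + (1/2) * Real.sqrt (4*a^2 + 1^2)) /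
          (a + 1 + Real.sqrt (1 + a^2)))
      (nhdsWithin 0 (Set.Ioi 0)) (nhds (3/4)) ∧
    (∀ a b : ℝ, 0 < a → 0 < b →
      ((1/2) * Real.sqrt (4*b^2 + a^2) + (1/2) * Real.sqrt (4*a^2 + b^2)) /
        (a + b + Real.sqrt (a^2 + b^2)) ≠ 3/4) := by
  have h4 : Real.sqrt 4 = 2 := by
    rw [show (4:ℝ) = 2^2 by norm_num, Real.sqrt_sq (by norm_num)]
  constructor
  · apply Filter.Tendsto.mono_left _ nhdsWithin_le_nhds
    have hc : ContinuousAt (fun a : ℝ =>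
        ((1/2) * Real.sqrt (4*1^2 + a^2) + (1/2) * Real.sqrt (4*a^2 + 1^2)) /
          (a + 1 + Real.sqrt (1 + a^2))) 0 := by
      apply ContinuousAt.div
      · fun_prop
      · fun_prop
      · simp [Real.sqrt_one]
    have := hc.tendsto
    have h34 : ((1:ℝ) + 2⁻¹) / (1 + 1) = 3/4 := by norm_num
    simpa [h4, Real.sqrt_one, h34] using this
  · intro a b ha hb h
    set w := Real.sqrt (a^2 + b^2) with hwdef
    have hw2 : w^2 = a^2 + b^2 := Real.sq_sqrt (by positivity)
    have hbw : b < w := by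
      rw [hwdef]
      exact (Real.lt_sqrt hb.le).mpr (by nlinarith)
    have haw : a < w := by
      rw [hwdef]
      exact (Real.lt_sqrt ha.le).mpr (by nlinarith)
    have hwab : w < a + b := by
      rw [hwdef]
      exact (Real.sqrt_lt' (by positivity)).mpr (by nlinarith)
    have hu : Real.sqrt (4*b^2 + a^2) < b + w :=
      (Real.sqrt_lt' (by linarith)).mpr (by nlinarith)
    have hv : Real.sqrt (4*a^2 + b^2) < a + w :=
      (Real.sqrt_lt' (by linarith)).mpr (by nlinarith)
    have hden : (0:ℝ) < a + b + w := by linarith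
    rw [div_eq_iff hden.ne'] at h
    nlinarith [h, hu, hv, hwab]
end
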